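/- arXiv:2404.00550 — 2 statements merged into one kernel-verified Lean document; each statement's English description precedes it below -/
import Mathlib

section
/- Let X be a Banach space, (y_n) a sequence with y_n ⇀ y weakly, and (y_n*) norming functionals: ‖y_n*‖ = 1 and y_n*(y_n) = ‖y_n‖ for all n. Suppose y_n* converges weak* to y*. Then for every ε > 0 there exists M such that for all m ≥ M, liminf over n of ‖(y_m − y_n) − y‖ ≥ liminf_n ‖y_n‖ − ε. -/
/-!
By uniform boundedness the weakly convergent `(y n)` is bounded, which keeps the liminfs finite.
Writing `‖y n‖ = ystar n (y n) = ystar n (y n - y m + y₀) + ystar n (y m - y₀)` and using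
`‖ystar n‖ = 1` gives `‖y n‖ ≤ ‖y m - y n - y₀‖ + ystar n (y m - y₀)`. The last term tends to
`g (y m - y₀)` as `n → ∞`, and `g (y m - y₀) → 0` as `m → ∞` by weak convergence, so it is
eventually below `ε`.
-/

open Filter Topology

theorem NormedSpace.exists_norm_le_of_forall_dual {𝕜 E ι : Type*} [RCLike 𝕜]
    [SeminormedAddCommGroup E] [NormedSpace 𝕜 E] (x : ι → E)
    (h : ∀ f : StrongDual 𝕜 E, ∃ C, ∀ i, ‖f (x i)‖ ≤ C) : ∃ C, ∀ i, ‖x i‖ ≤ C := by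
  obtain ⟨C, hC⟩ := banach_steinhaus (g := fun i ↦ inclusionInDoubleDual 𝕜 E (x i)) h
  exact ⟨C, fun i ↦ (inclusionInDoubleDualLi 𝕜).norm_map (x i) ▸ hC i⟩

theorem exists_norm_le_of_weak_tendsto {𝕜 E : Type*} [RCLike 𝕜]
    [SeminormedAddCommGroup E] [NormedSpace 𝕜 E] {x : ℕ → E} {x₀ : E}
    (h : ∀ f : StrongDual 𝕜 E, Tendsto (fun n ↦ f (x n)) atTop (𝓝 (f x₀))) :
    ∃ C, ∀ n, ‖x n‖ ≤ C :=
  NormedSpace.exists_norm_le_of_forall_dual x fun f ↦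
    let ⟨C, hC⟩ := (h f).norm.bddAbove_range
    ⟨C, fun n ↦ hC (Set.mem_range_self n)⟩

theorem norm_le_norm_sub_add_of_norming {E : Type*} [SeminormedAddCommGroup E] [NormedSpace ℝ E]
    {φ : StrongDual ℝ E} (hφ : ‖φ‖ ≤ 1) {z : E} (hz : φ z = ‖z‖) (w : E) :
    ‖z‖ ≤ ‖w - z‖ + φ w :=
  calc ‖z‖ = φ (z - w) + φ w := by rw [map_sub, hz, sub_add_cancel]
    _ ≤ ‖z - w‖ + φ w := by
        gcongr
        calc φ (z - w) ≤ ‖φ‖ * ‖z - w‖ := (le_abs_self _).trans (φ.le_opNorm _)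
          _ ≤ ‖z - w‖ := mul_le_of_le_one_left (norm_nonneg _) hφ
    _ = ‖w - z‖ + φ w := by rw [norm_sub_rev]

theorem Filter.liminf_le_liminf_add_of_eventually_le {ι : Type*} {F : Filter ι} [NeBot F]
    {f g : ι → ℝ} {c : ℝ} (hf : IsBoundedUnder (· ≥ ·) F f) (hg_le : IsBoundedUnder (· ≤ ·) F g)
    (hg_ge : IsBoundedUnder (· ≥ ·) F g) (h : ∀ᶠ i in F, f i ≤ g i + c) :
    liminf f F ≤ liminf g F + c := by
  rw [← liminf_add_const F g c hg_le.isCoboundedUnder_ge hg_ge]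
  exact liminf_le_liminf h hf (isBoundedUnder_le_add hg_le isBoundedUnder_const).isCoboundedUnder_ge

theorem stmt_5_general (X : Type*) [NormedAddCommGroup X] [NormedSpace ℝ X]
    (y : ℕ → X) (y₀ : X)
    (hweak : ∀ f : X →L[ℝ] ℝ, Tendsto (fun n => f (y n)) atTop (nhds (f y₀)))
    (ystar : ℕ → X →L[ℝ] ℝ) (hnorming : ∀ n, ‖ystar n‖ = 1 ∧ ystar n (y n) = ‖y n‖)
    (g : X →L[ℝ] ℝ)
    (hwstar : ∀ x : X, Tendsto (fun n => ystar n x) atTop (nhds (g x))) :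
    ∀ ε > (0:ℝ), ∃ M : ℕ, ∀ m ≥ M,
      liminf (fun n => ‖y n‖) atTop - ε ≤
        liminf (fun n => ‖(y m - y n) - y₀‖) atTop := by
  intro ε hε
  obtain ⟨C, hC⟩ := exists_norm_le_of_weak_tendsto hweak
  have hg : Tendsto (fun m ↦ g (y m - y₀)) atTop (𝓝 0) := by
    simpa only [map_sub, sub_self] using (hweak g).sub_const (g y₀)
  obtain ⟨M, hM⟩ := eventually_atTop.1 (hg.eventually_lt_const hε)
  refine ⟨M, fun m hm ↦ ?_⟩
  have hle : ∀ᶠ n in atTop, ‖y n‖ ≤ ‖(y m - y n) - y₀‖ + ε := by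
    filter_upwards [(hwstar _).eventually_lt_const (hM m hm)] with n hn
    have := norm_le_norm_sub_add_of_norming (hnorming n).1.le (hnorming n).2 (y m - y₀)
    rw [sub_right_comm] at this
    linarith
  have hbdd : IsBoundedUnder (· ≤ ·) atTop (fun n ↦ ‖(y m - y n) - y₀‖) :=
    isBoundedUnder_of ⟨‖y m‖ + C + ‖y₀‖, fun n ↦
      (norm_sub_le _ _).trans (by gcongr; exact (norm_sub_le _ _).trans (by gcongr; exact hC n))⟩
  have hnonneg {u : ℕ → X} : IsBoundedUnder (· ≥ ·) atTop (fun n ↦ ‖u n‖) :=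
    isBoundedUnder_of ⟨0, fun n ↦ norm_nonneg _⟩
  linarith [liminf_le_liminf_add_of_eventually_le hnonneg hbdd hnonneg hle]

theorem stmt_5 (X : Type*) [NormedAddCommGroup X] [NormedSpace ℝ X] [CompleteSpace X]
    (y : ℕ → X) (y₀ : X)
    (hweak : ∀ f : X →L[ℝ] ℝ, Tendsto (fun n => f (y n)) atTop (nhds (f y₀)))
    (ystar : ℕ → X →L[ℝ] ℝ) (hnorming : ∀ n, ‖ystar n‖ = 1 ∧ ystar n (y n) = ‖y n‖)
    (g : X →L[ℝ] ℝ)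
    (hwstar : ∀ x : X, Tendsto (fun n => ystar n x) atTop (nhds (g x))) :
    ∀ ε > (0:ℝ), ∃ M : ℕ, ∀ m ≥ M,
      liminf (fun n => ‖y n‖) atTop - ε ≤
        liminf (fun n => ‖(y m - y n) - y₀‖) atTop :=
  stmt_5_general X y y₀ hweak ystar hnorming g hwstar
end

section
/- If X is a Banach space whose closed dual unit ball is weak*-sequentially compact, and for every ε > 0 there exists a sequence (y_n) in X with y_n ⇀ y weakly, ‖y‖ ≤ 1/2, ‖y_n‖ > 1 − ε for all n, and ‖y_m − y_n‖ ≤ 1/2 + ε for all large m, n, then J(X) = 2. -/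
/-!
Let `y n ⇀ y₀` be as in the hypothesis and `f n` norming functionals. Since `‖y n‖ ≈ 1` while
`‖y n - y m‖ ≈ 1/2`, every late `f j` is `≈ 1/2` on all late `y m`, hence on `y₀`. A weak*-limit
`g` of a subsequence of the `f j` is at most `‖y₀‖ ≤ 1/2` on `y₀`, so one can pick `n` and then `m`
along that subsequence with both cross values `f n (y m)` and `f m (y n)` at most `≈ 1/2`. Then
`x = 2 y₀` and `z ≈ 2 (y n - y m)`, rescaled into the unit ball, satisfy `f n (x + z) ≈ 2` and
`f m (x - z) ≈ 2`.
-/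

open Filter Topology

section JamesConstant

variable {X : Type*} [SeminormedAddCommGroup X]

noncomputable def jamesConstant (X : Type*) [SeminormedAddCommGroup X] : ℝ :=
  sSup {r : ℝ | ∃ x y : X, ‖x‖ ≤ 1 ∧ ‖y‖ ≤ 1 ∧ r = min ‖x + y‖ ‖x - y‖}

lemma min_norm_add_norm_sub_le_two {x y : X} (hx : ‖x‖ ≤ 1) (hy : ‖y‖ ≤ 1) :
    min ‖x + y‖ ‖x - y‖ ≤ 2 :=
  (min_le_left _ _).trans <| (norm_add_le x y).trans (by linarith)

lemma jamesConstant_eq_two_of_forall_pos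
    (h : ∀ δ > 0, ∃ x y : X, ‖x‖ ≤ 1 ∧ ‖y‖ ≤ 1 ∧ 2 - δ < min ‖x + y‖ ‖x - y‖) :
    jamesConstant X = 2 := by
  have hbdd : BddAbove {r : ℝ | ∃ x y : X, ‖x‖ ≤ 1 ∧ ‖y‖ ≤ 1 ∧ r = min ‖x + y‖ ‖x - y‖} := by
    refine ⟨2, ?_⟩
    rintro r ⟨x, y, hx, hy, rfl⟩
    exact min_norm_add_norm_sub_le_two hx hy
  apply le_antisymm
  · refine csSup_le ⟨0, 0, 0, by simp⟩ ?_
    rintro r ⟨x, y, hx, hy, rfl⟩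
    exact min_norm_add_norm_sub_le_two hx hy
  · refine le_of_forall_pos_lt_add fun δ hδ => ?_
    obtain ⟨x, y, hx, hy, hxy⟩ := h δ hδ
    have := le_csSup hbdd ⟨x, y, hx, hy, rfl⟩
    rw [jamesConstant]
    linarith

end JamesConstant

def DualUnitBallWeakStarSeqCompact (X : Type*) [SeminormedAddCommGroup X] [NormedSpace ℝ X] :
    Prop :=
  ∀ f : ℕ → StrongDual ℝ X, (∀ n, ‖f n‖ ≤ 1) →
    ∃ (φ : ℕ → ℕ) (g : StrongDual ℝ X), StrictMono φ ∧ ‖g‖ ≤ 1 ∧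
      ∀ x : X, Tendsto (fun n => f (φ n) x) atTop (𝓝 (g x))

section Dual

variable {X : Type*} [SeminormedAddCommGroup X] [NormedSpace ℝ X]

lemma apply_le_norm_of_norm_le_one {f : StrongDual ℝ X} (hf : ‖f‖ ≤ 1) (x : X) : f x ≤ ‖x‖ :=
  (Real.le_norm_self _).trans <| (f.le_of_opNorm_le hf x).trans_eq (one_mul _)

lemma norm_sub_le_apply_of_tendsto {f : StrongDual ℝ X} (hf : ‖f‖ ≤ 1) {a y₀ : X}
    (hfa : f a = ‖a‖) {y : ℕ → X} (hy : Tendsto (fun n => f (y n)) atTop (𝓝 (f y₀))) {c : ℝ}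
    (hc : ∀ᶠ n in atTop, ‖a - y n‖ ≤ c) : ‖a‖ - c ≤ f y₀ := by
  refine ge_of_tendsto hy (hc.mono fun n hn => ?_)
  have := apply_le_norm_of_norm_le_one hf (a - y n)
  rw [map_sub] at this
  linarith

lemma DualUnitBallWeakStarSeqCompact.exists_apply_lt_norm_add
    (hX : DualUnitBallWeakStarSeqCompact X) {f : ℕ → StrongDual ℝ X} (hf : ∀ n, ‖f n‖ ≤ 1)
    {y : ℕ → X} {y₀ : X} (hy : ∀ g : StrongDual ℝ X, Tendsto (fun n => g (y n)) atTop (𝓝 (g y₀)))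
    {ε : ℝ} (hε : 0 < ε) (N : ℕ) :
    ∃ n ≥ N, ∃ m ≥ N, f n (y m) < ‖y₀‖ + ε ∧ f m (y n) < ‖y₀‖ + ε := by
  obtain ⟨φ, g, hφ, hg, hfg⟩ := hX f hf
  have hg_late : ∀ᶠ n in atTop, g (y n) < g y₀ + ε / 2 :=
    (hy g).eventually_lt_const (by linarith)
  obtain ⟨n, hgn, hn⟩ := (hg_late.and (eventually_ge_atTop N)).exists
  have hfn_late : ∀ᶠ k in atTop, f n (y (φ k)) < f n y₀ + ε :=
    ((hy (f n)).comp hφ.tendsto_atTop).eventually_lt_const (by linarith)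
  have hfφ_late : ∀ᶠ k in atTop, f (φ k) (y n) < g (y n) + ε / 2 :=
    (hfg (y n)).eventually_lt_const (by linarith)
  obtain ⟨k, hfn, hfφ, hk⟩ :=
    (hfn_late.and (hfφ_late.and (hφ.tendsto_atTop.eventually_ge_atTop N))).exists
  have hfny₀ := apply_le_norm_of_norm_le_one (hf n) y₀
  have hgy₀ := apply_le_norm_of_norm_le_one hg y₀
  exact ⟨n, hn, φ k, hk, by linarith, by linarith⟩

lemma two_sub_le_norm_two_smul_add_inv_smul_sub {f : StrongDual ℝ X} (hf : ‖f‖ ≤ 1)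
    {y₀ a b : X} {δ : ℝ} (hδ : 0 ≤ δ) (hfy₀ : 1 / 2 - 2 * δ ≤ f y₀) (hfa : 1 - δ ≤ f a)
    (hfb : f b ≤ 1 / 2 + 2 * δ) :
    2 - 12 * δ ≤ ‖(2 : ℝ) • y₀ + (1 / 2 + δ)⁻¹ • (a - b)‖ := by
  have hfab : 1 - 8 * δ ≤ (f a - f b) / (1 / 2 + δ) := by
    rw [le_div_iff₀ (by positivity)]
    nlinarith
  calc 2 - 12 * δ ≤ 2 * f y₀ + (f a - f b) / (1 / 2 + δ) := by linarith
    _ = f ((2 : ℝ) • y₀ + (1 / 2 + δ)⁻¹ • (a - b)) := by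
      simp only [map_add, map_smul, map_sub, smul_eq_mul]
      ring
    _ ≤ _ := apply_le_norm_of_norm_le_one hf _

lemma exists_two_sub_le_min_norm_add_norm_sub {f g : StrongDual ℝ X} (hf : ‖f‖ ≤ 1)
    (hg : ‖g‖ ≤ 1) {y₀ a b : X} {δ : ℝ} (hδ : 0 ≤ δ) (hy₀ : ‖y₀‖ ≤ 1 / 2)
    (hab : ‖a - b‖ ≤ 1 / 2 + δ) (hfy₀ : 1 / 2 - 2 * δ ≤ f y₀) (hgy₀ : 1 / 2 - 2 * δ ≤ g y₀)
    (hfa : 1 - δ ≤ f a) (hgb : 1 - δ ≤ g b) (hfb : f b ≤ 1 / 2 + 2 * δ)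
    (hga : g a ≤ 1 / 2 + 2 * δ) :
    ∃ x z : X, ‖x‖ ≤ 1 ∧ ‖z‖ ≤ 1 ∧ 2 - 12 * δ ≤ min ‖x + z‖ ‖x - z‖ := by
  refine ⟨(2 : ℝ) • y₀, (1 / 2 + δ)⁻¹ • (a - b), ?_, ?_, le_min ?_ ?_⟩
  · rw [norm_smul, Real.norm_two]
    linarith
  · rw [norm_smul, Real.norm_of_nonneg (by positivity)]
    exact inv_mul_le_one_of_le₀ hab (by positivity)
  · exact two_sub_le_norm_two_smul_add_inv_smul_sub hf hδ hfy₀ hfa hfb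
  · rw [← neg_sub b a, smul_neg, sub_neg_eq_add]
    exact two_sub_le_norm_two_smul_add_inv_smul_sub hg hδ hgy₀ hgb hga

end Dual

theorem stmt_17_general (X : Type*) [NormedAddCommGroup X] [NormedSpace ℝ X]
    (hwsc : ∀ f : ℕ → (X →L[ℝ] ℝ), (∀ n, ‖f n‖ ≤ 1) →
      ∃ (φ : ℕ → ℕ) (g : X →L[ℝ] ℝ), StrictMono φ ∧ ‖g‖ ≤ 1 ∧
        ∀ x : X, Tendsto (fun n => f (φ n) x) atTop (nhds (g x)))
    (h : ∀ ε > (0:ℝ), ∃ (y : ℕ → X) (y₀ : X),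
      (∀ f : X →L[ℝ] ℝ, Tendsto (fun n => f (y n)) atTop (nhds (f y₀))) ∧
      ‖y₀‖ ≤ 1/2 ∧ (∀ n, 1 - ε < ‖y n‖) ∧
      ∃ N : ℕ, ∀ m ≥ N, ∀ n ≥ N, ‖y m - y n‖ ≤ 1/2 + ε) :
    sSup {r : ℝ | ∃ x y : X, ‖x‖ ≤ 1 ∧ ‖y‖ ≤ 1 ∧ r = min ‖x + y‖ ‖x - y‖} = 2 := by
  refine jamesConstant_eq_two_of_forall_pos fun δ hδ => ?_
  have hε : 0 < δ / 13 := by positivity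
  obtain ⟨y, y₀, hy, hy₀, hyn, N, hN⟩ := h (δ / 13) hε
  choose f hf hfy using fun n => exists_dual_vector'' ℝ (y n)
  have hfy : ∀ n, f n (y n) = ‖y n‖ := hfy
  have hfy₀ : ∀ j ≥ N, 1 / 2 - 2 * (δ / 13) ≤ f j y₀ := fun j hj => by
    have := norm_sub_le_apply_of_tendsto (hf j) (hfy j) (hy (f j))
      (eventually_atTop.2 ⟨N, hN j hj⟩)
    linarith [hyn j]
  obtain ⟨n, hn, m, hm, hnm, hmn⟩ :=
    DualUnitBallWeakStarSeqCompact.exists_apply_lt_norm_add hwsc hf hy hε N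
  obtain ⟨x, z, hx, hz, hxz⟩ := exists_two_sub_le_min_norm_add_norm_sub (hf n) (hf m)
    (by positivity) hy₀ (hN n hn m hm) (hfy₀ n hn) (hfy₀ m hm) (by linarith [hfy n, hyn n])
    (by linarith [hfy m, hyn m]) (by linarith) (by linarith)
  exact ⟨x, z, hx, hz, by linarith⟩

theorem stmt_17 (X : Type*) [NormedAddCommGroup X] [NormedSpace ℝ X] [CompleteSpace X]
    (hwsc : ∀ f : ℕ → (X →L[ℝ] ℝ), (∀ n, ‖f n‖ ≤ 1) →
      ∃ (φ : ℕ → ℕ) (g : X →L[ℝ] ℝ), StrictMono φ ∧ ‖g‖ ≤ 1 ∧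
        ∀ x : X, Tendsto (fun n => f (φ n) x) atTop (nhds (g x)))
    (h : ∀ ε > (0:ℝ), ∃ (y : ℕ → X) (y₀ : X),
      (∀ f : X →L[ℝ] ℝ, Tendsto (fun n => f (y n)) atTop (nhds (f y₀))) ∧
      ‖y₀‖ ≤ 1/2 ∧ (∀ n, 1 - ε < ‖y n‖) ∧
      ∃ N : ℕ, ∀ m ≥ N, ∀ n ≥ N, ‖y m - y n‖ ≤ 1/2 + ε) :
    sSup {r : ℝ | ∃ x y : X, ‖x‖ ≤ 1 ∧ ‖y‖ ≤ 1 ∧ r = min ‖x + y‖ ‖x - y‖} = 2 :=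
  stmt_17_general X hwsc h
end
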